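/- The local-magic state obtained by applying a T gate to one qubit of the Bell state, v = (1/√2)(|00⟩ + e^{iπ/4}|11⟩) ∈ ℂ² ⊗ ℂ², is maximally entangled yet has stabilizer 2-Rényi entropy M₂(v vᴴ) = log₂(4/3). -/

import Mathlib

noncomputable section
open Matrix Kronecker

/-- The four single-qubit Pauli matrices I, X, Y, Z. -/
def pauli : Fin 4 → Matrix (Fin 2) (Fin 2) ℂ :=
  ![1, !![0, 1; 1, 0], !![0, -Complex.I; Complex.I, 0], !![1, 0; 0, -1]]

/-- Two-qubit Pauli strings σ₁ ⊗ σ₂. -/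
def pauli2 (a : Fin 4 × Fin 4) : Matrix (Fin 2 × Fin 2) (Fin 2 × Fin 2) ℂ :=
  pauli a.1 ⊗ₖ pauli a.2

/-- Rank-one density matrix v vᴴ. -/
def dm {ι : Type*} (v : ι → ℂ) : Matrix ι ι ℂ := Matrix.vecMulVec v (star v)

/-- Stabilizer 2-Rényi entropy of a two-qubit state. -/
def M2two (ψ : Matrix (Fin 2 × Fin 2) (Fin 2 × Fin 2) ℂ) : ℝ :=
  - Real.logb 2 ((1 / 4) * ∑ a : Fin 4 × Fin 4, ‖(pauli2 a * ψ).trace‖ ^ 4)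

/-- Partial trace over the second qubit. -/
def ptraceB (M : Matrix (Fin 2 × Fin 2) (Fin 2 × Fin 2) ℂ) : Matrix (Fin 2) (Fin 2) ℂ :=
  Matrix.of fun i i' => ∑ j : Fin 2, M (i, j) (i', j)

/-- The local-magic state (1/√2)(|00⟩ + e^{iπ/4}|11⟩). -/
def lmState : Fin 2 × Fin 2 → ℂ := fun p =>
  if p = ((0 : Fin 2), (0 : Fin 2)) then (1 / Real.sqrt 2 : ℝ)
  else if p = ((1 : Fin 2), (1 : Fin 2)) then
    (1 / Real.sqrt 2 : ℝ) * Complex.exp (Complex.I * (Real.pi / 4 : ℝ))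
  else 0

/-! The state is the Bell state with a phase `ω = e^{iπ/4}` on `|11⟩`. For `|ω| = 1` its reduced
state is `1/2`, and the only nonzero Pauli expectations are `⟨II⟩ = ⟨ZZ⟩ = 1`, `⟨XX⟩ = -⟨YY⟩ = re ω`
and `⟨XY⟩ = ⟨YX⟩ = im ω`, so the sum of fourth powers is `2 + 2 (re⁴ ω + im⁴ ω)`, which is `3` at
`ω = e^{iπ/4}`. -/

open ComplexConjugate

def bellState (ω : ℂ) : Fin 2 × Fin 2 → ℂ := fun p =>
  if p = ((0 : Fin 2), (0 : Fin 2)) then (1 / Real.sqrt 2 : ℝ)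
  else if p = ((1 : Fin 2), (1 : Fin 2)) then (1 / Real.sqrt 2 : ℝ) * ω
  else 0

lemma inv_sqrt_two_mul_self : (Real.sqrt 2 : ℂ)⁻¹ * (Real.sqrt 2 : ℂ)⁻¹ = 1 / 2 := by
  rw [← mul_inv, ← Complex.ofReal_mul, Real.mul_self_sqrt zero_le_two]; norm_num

lemma mul_conj_of_norm_eq_one {ω : ℂ} (hω : ‖ω‖ = 1) : ω * conj ω = 1 := by
  rw [Complex.mul_conj, Complex.normSq_eq_norm_sq, hω]; norm_num

section bellState

variable {ω : ℂ} (hω : ‖ω‖ = 1)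
include hω

lemma ptraceB_dm_bellState : ptraceB (dm (bellState ω)) = (1 / 2 : ℂ) • 1 := by
  have h11 : (Real.sqrt 2 : ℂ)⁻¹ * ω * ((Real.sqrt 2 : ℂ)⁻¹ * conj ω) = 2⁻¹ := by
    linear_combination ω * conj ω * inv_sqrt_two_mul_self + mul_conj_of_norm_eq_one hω / 2
  ext i i'
  fin_cases i <;> fin_cases i' <;>
    simp [ptraceB, dm, bellState, vecMulVec_apply, Fin.sum_univ_two, inv_sqrt_two_mul_self, h11]

lemma trace_mul_dm_bellState (A : Matrix (Fin 2 × Fin 2) (Fin 2 × Fin 2) ℂ) :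
    (A * dm (bellState ω)).trace =
      (A (0, 0) (0, 0) + A (1, 1) (1, 1) + A (0, 0) (1, 1) * ω + A (1, 1) (0, 0) * conj ω) / 2 := by
  simp only [trace, dm, diag_apply, Matrix.mul_apply, vecMulVec_apply, bellState, one_div,
    Complex.ofReal_inv, Pi.star_apply, RCLike.star_def, Fintype.sum_prod_type, Prod.mk.injEq,
    Fin.sum_univ_two, and_true, zero_ne_one, and_false, ↓reduceIte, one_ne_zero, map_inv₀,
    Complex.conj_ofReal, map_zero, map_mul]
  linear_combination
    (A (0, 0) (0, 0) + A (0, 0) (1, 1) * ω + A (1, 1) (0, 0) * conj ω + A (1, 1) (1, 1) * ω * conj ω)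
      * inv_sqrt_two_mul_self + A (1, 1) (1, 1) / 2 * mul_conj_of_norm_eq_one hω

lemma sum_norm_trace_pauli2_mul_dm_bellState_pow_four :
    ∑ a : Fin 4 × Fin 4, ‖(pauli2 a * dm (bellState ω)).trace‖ ^ 4 =
      2 + 2 * (ω.re ^ 4 + ω.im ^ 4) := by
  have hXX : ω + conj ω = ((2 * ω.re : ℝ) : ℂ) := Complex.add_conj ω
  have hXY : -(Complex.I * ω) + Complex.I * conj ω = ((2 * ω.im : ℝ) : ℂ) := by
    apply Complex.ext <;> simp [two_mul]
  have hYY : -ω + -conj ω = ((-(2 * ω.re) : ℝ) : ℂ) := by rw [← neg_add, hXX]; push_cast; ring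
  simp only [trace_mul_dm_bellState hω, Fintype.sum_prod_type, Fin.sum_univ_four]
  simp only [pauli2, pauli, kroneckerMap_apply, one_apply_eq, mul_one, ne_eq, zero_ne_one,
    not_false_eq_true, one_apply_ne, mul_zero, zero_mul, add_zero, one_ne_zero, add_self_div_two,
    norm_one, of_apply, norm_zero, OfNat.ofNat_ne_zero, cons_val, mul_neg, add_neg_cancel, one_mul,
    zero_add, hXX, Complex.ofReal_mul, Complex.ofReal_ofNat, mul_div_cancel_left₀,
    Complex.norm_real, Real.norm_eq_abs, Even.pow_abs ⟨2, rfl⟩, neg_mul, hXY, Complex.I_mul_I,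
    neg_neg, hYY, Complex.ofReal_neg, Complex.norm_div, norm_neg, Complex.norm_mul,
    Complex.norm_ofNat]
  ring

lemma M2two_dm_bellState :
    M2two (dm (bellState ω)) = - Real.logb 2 ((1 + ω.re ^ 4 + ω.im ^ 4) / 2) := by
  rw [M2two, sum_norm_trace_pauli2_mul_dm_bellState_pow_four hω]
  congr 2
  ring

end bellState

theorem local_magic_state_maximally_entangled_with_magic :
    ptraceB (dm lmState) = ((1 / 2 : ℂ)) • (1 : Matrix (Fin 2) (Fin 2) ℂ) ∧
      M2two (dm lmState) = Real.logb 2 (4 / 3) := by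
  have hlm : lmState = bellState (Complex.exp ((Real.pi / 4 : ℝ) * Complex.I)) := by
    rw [mul_comm]; rfl
  have hω := Complex.norm_exp_ofReal_mul_I (Real.pi / 4)
  have hcos4 : Real.cos (Real.pi / 4) ^ 4 = 1 / 4 := by
    rw [Real.cos_pi_div_four, div_pow, show 4 = 2 * 2 by rfl, pow_mul, Real.sq_sqrt zero_le_two]
    norm_num
  refine ⟨hlm ▸ ptraceB_dm_bellState hω, ?_⟩
  rw [hlm, M2two_dm_bellState hω, Complex.exp_ofReal_mul_I_re, Complex.exp_ofReal_mul_I_im,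
    Real.sin_pi_div_four, ← Real.cos_pi_div_four, hcos4, ← Real.logb_inv]
  norm_num
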